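/- arXiv:2302.01899 — 3 statements merged into one kernel-verified Lean document; each statement's English description precedes it below -/
import Mathlib

section
/- Let L : ℂ[x] → ℂ be a linear functional admitting monic orthogonal polynomials {p_n}_{n≥0} with normalizations h_n. Suppose φ ∈ ℂ[x] is monic with deg φ = d₁, ψ ∈ ℂ[x] has deg ψ = d₂ ≥ 1, and L[φ·Δp] = L[ψ·p] for every p ∈ ℂ[x]. Set s = max(d₁ − 2, d₂ − 1), and assume that if d₁ = d₂ + 1 then the leading coefficient ψ_{d₂} of ψ satisfies ψ_{d₂} ≠ n − s for every n ∈ ℕ₀. Then for every integer n > s there exist complex numbers ε_{n,k} (n − s ≤ k ≤ n + d₁) with ε_{n,n−s} ≠ 0 such that φ·Δp_{n+1} = ∑_{k=n−s}^{n+d₁} ε_{n,k} p_k. -/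
/-!
Write `q = φ·Δp_{n+1}` and `r_k(x) = p_k(x - 1)`. Since `Δ(ab) = Δa·b(x+1) + a·Δb`, the Pearson
equation moves `φΔ` across `L`: `L[q·p_k] = L[(ψ r_k - φ Δr_k)·p_{n+1}]`. The polynomial
`ψ r_k - φ Δr_k` has degree at most `k + s + 1`, so the Fourier coefficient of `q` at `p_k` vanishes
for `k < n - s`, while for `k = n - s` it is `h_{n+1}/h_{n-s}` times the coefficient of `x^{n+1}`,
namely `ψ_{s+1} - φ_{s+2}(n - s)`; the choice of `s` and the admissibility condition make this
nonzero.
-/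

open Polynomial Finset

/-- The forward difference of a polynomial: `(Δp)(x) = p(x+1) − p(x)`. -/
noncomputable def polyDelta (p : Polynomial ℂ) : Polynomial ℂ :=
  p.comp (X + C 1) - p

theorem coeff_comp_X_add_one_eq_sum {R : Type*} [CommSemiring R] {q : R[X]} {N : ℕ}
    (hN : q.natDegree < N) (j : ℕ) :
    (q.comp (X + C 1)).coeff j = ∑ i ∈ range N, q.coeff i * i.choose j := by
  conv_lhs => rw [q.as_sum_range' N hN]
  simp only [comp, eval₂_finsetSum, finsetSum_coeff, eval₂_monomial, coeff_C_mul, map_one,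
    coeff_X_add_one_pow]

theorem coeff_polyDelta_of_natDegree_le {q : ℂ[X]} {j : ℕ} (hj : q.natDegree ≤ j) :
    (polyDelta q).coeff j = 0 := by
  rw [polyDelta, coeff_sub, coeff_comp_X_add_one_eq_sum (Nat.lt_succ_of_le hj), sum_range_succ,
    sum_eq_zero fun i hi => by rw [Nat.choose_eq_zero_of_lt (mem_range.1 hi), Nat.cast_zero,
      mul_zero]]
  simp

theorem natDegree_polyDelta_le (q : ℂ[X]) : (polyDelta q).natDegree ≤ q.natDegree - 1 :=
  natDegree_le_iff_coeff_eq_zero.2 fun _ hj => coeff_polyDelta_of_natDegree_le (by omega)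

theorem polyDelta_eq_zero_of_natDegree_eq_zero {q : ℂ[X]} (hq : q.natDegree = 0) :
    polyDelta q = 0 :=
  ext fun _ => by rw [coeff_polyDelta_of_natDegree_le (by omega), coeff_zero]

theorem coeff_polyDelta_natDegree_sub_one (q : ℂ[X]) :
    (polyDelta q).coeff (q.natDegree - 1) = q.natDegree * q.leadingCoeff := by
  rcases Nat.eq_zero_or_pos q.natDegree with hq | hq
  · rw [hq, coeff_polyDelta_of_natDegree_le (by omega), Nat.cast_zero, zero_mul]
  obtain ⟨m, hm⟩ := Nat.exists_eq_add_one.2 hq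
  rw [polyDelta, coeff_sub, coeff_comp_X_add_one_eq_sum q.natDegree.lt_succ_self, hm,
    Nat.add_sub_cancel, sum_range_succ, sum_range_succ, sum_eq_zero fun i hi => by
      rw [Nat.choose_eq_zero_of_lt (mem_range.1 hi), Nat.cast_zero, mul_zero], leadingCoeff, hm]
  simp [mul_comm]

theorem polyDelta_mul (a b : ℂ[X]) :
    polyDelta (a * b) = polyDelta a * b.comp (X + C 1) + a * polyDelta b := by
  simp only [polyDelta, mul_comp]
  ring

theorem natDegree_mul_polyDelta_le (φ q : ℂ[X]) :
    (φ * polyDelta q).natDegree ≤ φ.natDegree + q.natDegree - 1 := by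
  rcases Nat.eq_zero_or_pos q.natDegree with hq | hq
  · simp [polyDelta_eq_zero_of_natDegree_eq_zero hq]
  · have := natDegree_polyDelta_le q
    exact natDegree_mul_le.trans (by omega)

theorem map_C_mul_mul {R : Type*} [CommSemiring R] (L : R[X] →ₗ[R] R) (c : R) (a b : R[X]) :
    L (C c * a * b) = c * L (a * b) := by
  rw [mul_assoc, ← smul_eq_C_mul, LinearMap.map_smul_of_tower, smul_eq_mul]

section Orthogonal

variable {R : Type*} [CommRing R] {L : R[X] →ₗ[R] R} {p : ℕ → R[X]} {h : ℕ → R}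

theorem degree_sub_C_coeff_mul_lt (hmonic : ∀ n, (p n).Monic) (hdeg : ∀ n, (p n).natDegree = n)
    {q : R[X]} {n : ℕ} (hq : q.natDegree ≤ n) : (q - C (q.coeff n) * p n).degree < n := by
  refine (degree_lt_iff_coeff_zero _ _).2 fun m hm => ?_
  rw [coeff_sub, coeff_C_mul]
  rcases hm.eq_or_lt with rfl | hm
  · have hlead : (p n).coeff n = 1 := by simpa [hdeg] using (hmonic n).coeff_natDegree
    rw [hlead, mul_one, sub_self]
  · rw [coeff_eq_zero_of_natDegree_lt (p := q) (hq.trans_lt hm),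
      coeff_eq_zero_of_natDegree_lt (p := p n) (by rwa [hdeg]), mul_zero, sub_zero]

theorem apply_mul_eq_zero_of_degree_lt (hmonic : ∀ n, (p n).Monic)
    (hdeg : ∀ n, (p n).natDegree = n)
    (horth : ∀ k n, L (p k * p n) = if k = n then h n else 0)
    {q : R[X]} {j : ℕ} (hq : q.degree < j) : L (q * p j) = 0 := by
  suffices ∀ N : ℕ, ∀ q : R[X], q.degree < N → N ≤ j → L (q * p j) = 0 from this j q hq le_rfl
  intro N
  induction N with
  | zero => intro q hq _; simp [show q = 0 by simpa using hq]
  | succ N ih =>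
    intro q hq hNj
    have hqN : q.natDegree ≤ N :=
      natDegree_le_of_degree_le (Order.le_of_lt_succ (by exact_mod_cast hq))
    have hsplit : q = (q - C (q.coeff N) * p N) + C (q.coeff N) * p N := by ring
    rw [hsplit, add_mul, map_add, ih _ (degree_sub_C_coeff_mul_lt hmonic hdeg hqN) (by omega),
      map_C_mul_mul, horth, if_neg (by omega), mul_zero, zero_add]

theorem apply_mul_eq_coeff_mul (hmonic : ∀ n, (p n).Monic) (hdeg : ∀ n, (p n).natDegree = n)
    (horth : ∀ k n, L (p k * p n) = if k = n then h n else 0)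
    {q : R[X]} {j : ℕ} (hq : q.natDegree ≤ j) : L (q * p j) = q.coeff j * h j := by
  have hsplit : q = (q - C (q.coeff j) * p j) + C (q.coeff j) * p j := by ring
  rw [hsplit, add_mul, map_add,
    apply_mul_eq_zero_of_degree_lt hmonic hdeg horth (degree_sub_C_coeff_mul_lt hmonic hdeg hq),
    map_C_mul_mul, horth, if_pos rfl, zero_add, ← hsplit]

theorem apply_sum_C_mul_mul (horth : ∀ k n, L (p k * p n) = if k = n then h n else 0)
    (c : ℕ → R) (s : Finset ℕ) (j : ℕ) :
    L ((∑ k ∈ s, C (c k) * p k) * p j) = if j ∈ s then c j * h j else 0 := by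
  simp only [sum_mul, map_sum, map_C_mul_mul, horth, mul_ite, mul_zero]
  exact sum_ite_eq' s j _

theorem eq_zero_of_forall_apply_mul_eq_zero [NoZeroDivisors R] (hmonic : ∀ n, (p n).Monic)
    (hdeg : ∀ n, (p n).natDegree = n) (hh : ∀ n, h n ≠ 0)
    (horth : ∀ k n, L (p k * p n) = if k = n then h n else 0)
    {e : R[X]} {N : ℕ} (he : e.natDegree ≤ N) (horthe : ∀ k ≤ N, L (e * p k) = 0) : e = 0 := by
  by_contra hne
  have := horthe _ he
  rw [apply_mul_eq_coeff_mul hmonic hdeg horth le_rfl] at this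
  exact mul_ne_zero (leadingCoeff_ne_zero.2 hne) (hh _) this

end Orthogonal

theorem eq_sum_Icc_of_apply_mul_eq_zero {K : Type*} [Field K] {L : K[X] →ₗ[K] K} {p : ℕ → K[X]}
    {h : ℕ → K} (hmonic : ∀ n, (p n).Monic) (hdeg : ∀ n, (p n).natDegree = n)
    (hh : ∀ n, h n ≠ 0) (horth : ∀ k n, L (p k * p n) = if k = n then h n else 0)
    {q : K[X]} {m N : ℕ} (hq : q.natDegree ≤ N) (hvanish : ∀ k < m, L (q * p k) = 0) :
    q = ∑ k ∈ Icc m N, C (L (q * p k) / h k) * p k := by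
  rw [← sub_eq_zero]
  refine eq_zero_of_forall_apply_mul_eq_zero hmonic hdeg hh horth (N := N) ?_ fun k hk => ?_
  · refine (natDegree_sub_le_of_le hq (natDegree_sum_le_of_forall_le _ _ fun k hk => ?_)).trans
      (max_self N).le
    exact natDegree_C_mul_le _ _ |>.trans ((hdeg k).trans_le (mem_Icc.1 hk).2)
  rw [sub_mul, map_sub, apply_sum_C_mul_mul horth]
  split_ifs with hkI
  · rw [div_mul_cancel₀ _ (hh k), sub_self]
  · rw [hvanish k (by simp only [mem_Icc, not_and_or, not_le] at hkI; omega), sub_zero]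

theorem comp_X_sub_C_comp_X_add_C {R : Type*} [CommRing R] (b : R[X]) (c : R) :
    (b.comp (X - C c)).comp (X + C c) = b := by
  rw [comp_assoc, sub_comp, X_comp, C_comp, add_sub_cancel_right, comp_X]

section Pearson

variable {L : ℂ[X] →ₗ[ℂ] ℂ} {φ ψ : ℂ[X]}

theorem apply_mul_polyDelta_mul_comp (hPearson : ∀ q, L (φ * polyDelta q) = L (ψ * q))
    (a b : ℂ[X]) :
    L (φ * polyDelta a * b.comp (X + C 1)) = L ((ψ * b - φ * polyDelta b) * a) := by
  have hparts :
      φ * polyDelta a * b.comp (X + C 1) = φ * polyDelta (a * b) - φ * polyDelta b * a := by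
    rw [polyDelta_mul]; ring
  rw [hparts, map_sub, hPearson, ← map_sub]
  congr 1
  ring

theorem natDegree_sub_mul_polyDelta_le {t : ℕ} (hψ : ψ.natDegree ≤ t + 1)
    (hφ : φ.natDegree ≤ t + 2) (r : ℂ[X]) :
    (ψ * r - φ * polyDelta r).natDegree ≤ r.natDegree + t + 1 :=
  (natDegree_sub_le_of_le natDegree_mul_le (natDegree_mul_polyDelta_le φ r)).trans (by omega)

theorem coeff_sub_mul_polyDelta {t : ℕ} (hψ : ψ.natDegree ≤ t + 1)
    (hφ : φ.natDegree ≤ t + 2) (r : ℂ[X]) :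
    (ψ * r - φ * polyDelta r).coeff (r.natDegree + t + 1) =
      (ψ.coeff (t + 1) - φ.coeff (t + 2) * r.natDegree) * r.leadingCoeff := by
  have hφr : (φ * polyDelta r).coeff (r.natDegree + t + 1) =
      φ.coeff (t + 2) * r.natDegree * r.leadingCoeff := by
    rcases Nat.eq_zero_or_pos r.natDegree with hr | hr
    · rw [polyDelta_eq_zero_of_natDegree_eq_zero hr, mul_zero, coeff_zero, hr, Nat.cast_zero,
        mul_zero, zero_mul]
    rw [show r.natDegree + t + 1 = t + 2 + (r.natDegree - 1) by omega,
      coeff_mul_add_eq_of_natDegree_le hφ (natDegree_polyDelta_le r),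
      coeff_polyDelta_natDegree_sub_one, mul_assoc]
  rw [coeff_sub, hφr, show r.natDegree + t + 1 = t + 1 + r.natDegree by omega,
    coeff_mul_add_eq_of_natDegree_le hψ le_rfl, ← leadingCoeff]
  ring

end Pearson

theorem coeff_sub_coeff_mul_ne_zero_of_admissible {φ ψ : ℂ[X]} (hφ : φ.Monic)
    (hψ : 1 ≤ ψ.natDegree) {s n : ℕ}
    (hs : s = max (φ.natDegree - 2) (ψ.natDegree - 1))
    (hadm : φ.natDegree = ψ.natDegree + 1 → ∀ n : ℕ, ψ.leadingCoeff ≠ (n : ℂ) - (s : ℂ))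
    (hn : s < n) : ψ.coeff (s + 1) - φ.coeff (s + 2) * ((n - s : ℕ) : ℂ) ≠ 0 := by
  rw [Nat.cast_sub hn.le]
  rcases (show ψ.natDegree = s + 1 ∨ ψ.natDegree < s + 1 by omega) with h2 | h2
  · have hψc : ψ.coeff (s + 1) = ψ.leadingCoeff := by rw [leadingCoeff, h2]
    rcases (show φ.natDegree = s + 2 ∨ φ.natDegree < s + 2 by omega) with h1 | h1
    · rw [hψc, ← h1, hφ.coeff_natDegree, one_mul, sub_ne_zero]
      exact hadm (by omega) n
    · rw [hψc, coeff_eq_zero_of_natDegree_lt h1, zero_mul, sub_zero, leadingCoeff_ne_zero]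
      rintro rfl
      simp at h2
  · have h1 : φ.natDegree = s + 2 := by omega
    rw [coeff_eq_zero_of_natDegree_lt h2, ← h1, hφ.coeff_natDegree, zero_sub, one_mul,
      neg_ne_zero, sub_ne_zero]
    exact_mod_cast hn.ne'

/-- Structure relation for a `Δ`-semiclassical functional: if `L` admits MOPs `{p_n}`
and satisfies the Pearson equation `L[φ·Δp] = L[ψ·p]` (with the admissibility
condition when `deg φ = deg ψ + 1`), then for `n > s = max(deg φ − 2, deg ψ − 1)`
there holds `φ·Δp_{n+1} = ∑_{k=n−s}^{n+deg φ} ε_{n,k} p_k` with `ε_{n,n−s} ≠ 0`. -/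
theorem structure_relation_of_semiclassical (L : Polynomial ℂ →ₗ[ℂ] ℂ)
    (p : ℕ → Polynomial ℂ) (h : ℕ → ℂ)
    (hmonic : ∀ n, (p n).Monic) (hdeg : ∀ n, (p n).natDegree = n)
    (hh : ∀ n, h n ≠ 0)
    (horth : ∀ k n, L (p k * p n) = if k = n then h n else 0)
    (φ ψ : Polynomial ℂ) (hφ : φ.Monic) (hψ : 1 ≤ ψ.natDegree)
    (hPearson : ∀ q : Polynomial ℂ, L (φ * polyDelta q) = L (ψ * q))
    (s : ℕ) (hs : s = max (φ.natDegree - 2) (ψ.natDegree - 1))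
    (hadm : φ.natDegree = ψ.natDegree + 1 →
      ∀ n : ℕ, ψ.leadingCoeff ≠ (n : ℂ) - (s : ℂ)) :
    ∀ n : ℕ, s < n → ∃ ε : ℕ → ℂ, ε (n - s) ≠ 0 ∧
      φ * polyDelta (p (n + 1)) =
        ∑ k ∈ Finset.Icc (n - s) (n + φ.natDegree), C (ε k) * p k := by
  intro n hn
  have hψs : ψ.natDegree ≤ s + 1 := by omega
  have hφs : φ.natDegree ≤ s + 2 := by omega
  have hdeg_shift : ∀ k, ((p k).comp (X - C 1)).natDegree = k := fun k => by
    rw [natDegree_comp, natDegree_X_sub_C, mul_one, hdeg]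
  have hdual : ∀ k, L (φ * polyDelta (p (n + 1)) * p k) =
      L ((ψ * (p k).comp (X - C 1) - φ * polyDelta ((p k).comp (X - C 1))) * p (n + 1)) :=
    fun k => by rw [← apply_mul_polyDelta_mul_comp hPearson, comp_X_sub_C_comp_X_add_C]
  have hvanish : ∀ k < n - s, L (φ * polyDelta (p (n + 1)) * p k) = 0 := fun k hk => by
    have hg := natDegree_sub_mul_polyDelta_le hψs hφs ((p k).comp (X - C 1))
    rw [hdeg_shift] at hg
    rw [hdual]
    exact apply_mul_eq_zero_of_degree_lt hmonic hdeg horth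
      (degree_le_natDegree.trans_lt (by exact_mod_cast (by omega : _ < n + 1)))
  have hlead : L (φ * polyDelta (p (n + 1)) * p (n - s)) ≠ 0 := by
    have hg := natDegree_sub_mul_polyDelta_le hψs hφs ((p (n - s)).comp (X - C 1))
    have hcoeff := coeff_sub_mul_polyDelta hψs hφs ((p (n - s)).comp (X - C 1))
    rw [hdeg_shift, show n - s + s + 1 = n + 1 by omega] at hg hcoeff
    rw [((hmonic _).comp_X_sub_C 1).leadingCoeff, mul_one] at hcoeff
    rw [hdual, apply_mul_eq_coeff_mul hmonic hdeg horth hg, hcoeff]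
    exact mul_ne_zero (coeff_sub_coeff_mul_ne_zero_of_admissible hφ hψ hs hadm hn) (hh _)
  have hqdeg : (φ * polyDelta (p (n + 1))).natDegree ≤ n + φ.natDegree :=
    (natDegree_mul_polyDelta_le _ _).trans (by rw [hdeg]; omega)
  exact ⟨_, div_ne_zero hlead (hh _),
    eq_sum_Icc_of_apply_mul_eq_zero hmonic hdeg hh horth hqdeg hvanish⟩
end

section
/- Let L₀, L₁ : ℂ[x] → ℂ be linear functionals admitting MOPs {P_n^{(0)}}, {P_n^{(1)}} with normalizations h_n^{(0)}, h_n^{(1)}. Suppose there are polynomials Λ₂(x) = ∑_{i=0}^{2} λ_i^{(2)} x^i with λ₂^{(2)} ≠ 0 and Λ₃(x) = ∑_{i=0}^{3} λ_i^{(3)} x^i such that λ₂^{(2)} + (n−1)λ₃^{(3)} ≠ 0 for every n ≥ 1, and such that L₁[Δp] = −L₀[Λ₂·p] and L₁[p] = L₀[Λ₃·p] for every p ∈ ℂ[x]. Then {L₀, L₁} is a Δ-coherent pair of the second kind: for every n ≥ 1, ΔP_{n+1}^{(0)} = (n+1)(P_n^{(1)} − τ_n P_{n−1}^{(1)}) where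 τ_n = [λ₂^{(2)} + (n−1)λ₃^{(3)}]/(n+1) · h_{n+1}^{(0)}/h_{n−1}^{(1)}, and τ_n ≠ 0. -/
/-!
Write a polynomial `r` as `q(x + 1)`. The Leibniz rule `Δ(pq) = Δp · q(x + 1) + p · Δq` and the
two functional relations give `L₁[Δp · r] = -L₀[(Λ₂ q + Λ₃ Δq) p]`. For `p = P⁽⁰⁾ₙ₊₁` and `deg r ≤ n - 1` the
polynomial `Λ₂ q + Λ₃ Δq` has degree `≤ n + 1`, so orthogonality leaves only its coefficient of
`xⁿ⁺¹`, which is `(λ₂⁽²⁾ + (n - 1) λ₃⁽³⁾)` times the coefficient of `xⁿ⁻¹` in `r`. Hence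
`ΔP⁽⁰⁾ₙ₊₁ - (n + 1)(P⁽¹⁾ₙ - τₙ P⁽¹⁾ₙ₋₁)`, whose degree is `< n`, is `L₁`-orthogonal to
`P⁽¹⁾₀, …, P⁽¹⁾ₙ₋₁`, and therefore vanishes.
-/

open Polynomial

structure IsMonicOrthogonal {K : Type*} [Field K] (L : K[X] →ₗ[K] K) (P : ℕ → K[X])
    (h : ℕ → K) : Prop where
  monic : ∀ n, (P n).Monic
  natDegree_eq : ∀ n, (P n).natDegree = n
  ne_zero : ∀ n, h n ≠ 0
  apply_mul : ∀ k n, L (P k * P n) = if k = n then h n else 0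

namespace IsMonicOrthogonal

variable {K : Type*} [Field K] {L : K[X] →ₗ[K] K} {P : ℕ → K[X]} {h : ℕ → K}

theorem coeff_self (hP : IsMonicOrthogonal L P h) (n : ℕ) : (P n).coeff n = 1 := by
  simpa [hP.natDegree_eq] using (hP.monic n).coeff_natDegree

theorem apply_mul_eq_zero_of_degree_lt (hP : IsMonicOrthogonal L P h) {p : K[X]} {n : ℕ}
    (hp : p.degree < n) : L (p * P n) = 0 := by
  let S : Sequence K := ⟨P, fun i => by
    rw [degree_eq_natDegree (hP.monic i).ne_zero, hP.natDegree_eq]⟩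
  have hspan : p ∈ Submodule.span K (P '' Set.Iio n) := by
    rw [S.span_degreeLT fun i _ => by simp [S, (hP.monic i).leadingCoeff]]
    exact mem_degreeLT.2 hp
  have hker : P '' Set.Iio n ⊆ LinearMap.ker (L ∘ₗ LinearMap.mulRight K (P n)) := by
    rintro _ ⟨k, hk, rfl⟩
    simp [hP.apply_mul, (Set.mem_Iio.1 hk).ne]
  simpa using Submodule.span_le.2 hker hspan

theorem apply_mul_of_natDegree_le (hP : IsMonicOrthogonal L P h) {p : K[X]} {n : ℕ}
    (hp : p.natDegree ≤ n) : L (p * P n) = p.coeff n * h n := by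
  have hlow : (p - C (p.coeff n) * P n).degree < n := by
    refine (degree_lt_iff_coeff_zero _ _).2 fun j hj => ?_
    rcases hj.eq_or_lt with rfl | hlt
    · simp [hP.coeff_self]
    · simp [coeff_eq_zero_of_natDegree_lt (hp.trans_lt hlt),
        coeff_eq_zero_of_natDegree_lt ((hP.natDegree_eq n).trans_lt hlt)]
  have hsplit : p * P n = (p - C (p.coeff n) * P n) * P n + p.coeff n • (P n * P n) := by
    rw [smul_eq_C_mul]
    ring
  rw [hsplit, map_add, map_smul, hP.apply_mul_eq_zero_of_degree_lt hlow, hP.apply_mul,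
    if_pos rfl, zero_add, smul_eq_mul]

theorem eq_zero_of_forall_apply_mul_eq_zero (hP : IsMonicOrthogonal L P h) {D : K[X]} {n : ℕ}
    (hD : D.natDegree ≤ n) (horth : ∀ k ≤ n, L (D * P k) = 0) : D = 0 := by
  by_contra hne
  have hlead := horth _ hD
  rw [hP.apply_mul_of_natDegree_le le_rfl] at hlead
  exact mul_ne_zero (leadingCoeff_ne_zero.2 hne) (hP.ne_zero _) hlead

end IsMonicOrthogonal

theorem Polynomial.coeff_taylor_of_natDegree_le {R : Type*} [CommSemiring R] {p : R[X]} {n : ℕ}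
    (hp : p.natDegree ≤ n) (r : R) : (taylor r p).coeff n = p.coeff n := by
  have h0 : (hasseDeriv n p).natDegree ≤ 0 := (natDegree_hasseDeriv_le p n).trans (by omega)
  rw [taylor_coeff, eq_C_of_natDegree_le_zero h0, eval_C, hasseDeriv_coeff, zero_add,
    Nat.choose_self, Nat.cast_one, one_mul]

theorem polyDelta_eq_taylor_sub (p : ℂ[X]) : polyDelta p = taylor 1 p - p := by
  rw [polyDelta, taylor_apply]

theorem polyDelta_C (c : ℂ) : polyDelta (C c) = 0 := by
  rw [polyDelta_eq_taylor_sub, taylor_C, sub_self]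

theorem polyDelta_mul_s8 (p q : ℂ[X]) :
    polyDelta (p * q) = polyDelta p * taylor 1 q + p * polyDelta q := by
  simp only [polyDelta_eq_taylor_sub, taylor_mul]
  ring

theorem natDegree_polyDelta_le_s8 {p : ℂ[X]} {d : ℕ} (hp : p.natDegree ≤ d + 1) :
    (polyDelta p).natDegree ≤ d :=
  natDegree_le_iff_coeff_eq_zero.2 fun j hj => by
    rw [polyDelta_eq_taylor_sub, coeff_sub, coeff_taylor_of_natDegree_le (hp.trans hj), sub_self]

theorem coeff_polyDelta_of_natDegree_le_s8 {p : ℂ[X]} {d : ℕ} (hp : p.natDegree ≤ d + 1) :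
    (polyDelta p).coeff d = (d + 1) * p.coeff (d + 1) := by
  have h1 : (hasseDeriv d p).natDegree ≤ 1 := (natDegree_hasseDeriv_le p d).trans (by omega)
  rw [polyDelta_eq_taylor_sub, coeff_sub, taylor_coeff, eq_X_add_C_of_natDegree_le_one h1]
  simp [hasseDeriv_coeff, add_comm 1 d]

section

variable {Λ₂ Λ₃ q : ℂ[X]} {d : ℕ}

theorem natDegree_mul_add_mul_polyDelta_le (hΛ₂ : Λ₂.natDegree ≤ 2) (hΛ₃ : Λ₃.natDegree ≤ 3)
    (hq : q.natDegree ≤ d) : (Λ₂ * q + Λ₃ * polyDelta q).natDegree ≤ d + 2 := by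
  refine natDegree_add_le_of_degree_le ((natDegree_mul_le_of_le hΛ₂ hq).trans (by omega)) ?_
  rcases d with _ | e
  · rw [eq_C_of_natDegree_le_zero hq, polyDelta_C, mul_zero, natDegree_zero]
    omega
  · exact (natDegree_mul_le_of_le hΛ₃ (natDegree_polyDelta_le_s8 hq)).trans (by omega)

theorem coeff_mul_add_mul_polyDelta (hΛ₂ : Λ₂.natDegree ≤ 2) (hΛ₃ : Λ₃.natDegree ≤ 3)
    (hq : q.natDegree ≤ d) :
    (Λ₂ * q + Λ₃ * polyDelta q).coeff (d + 2) = (Λ₂.coeff 2 + d * Λ₃.coeff 3) * q.coeff d := by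
  rw [coeff_add, add_comm d 2, coeff_mul_add_eq_of_natDegree_le hΛ₂ hq]
  rcases d with _ | e
  · rw [eq_C_of_natDegree_le_zero hq, polyDelta_C]
    simp
  · rw [show 2 + (e + 1) = 3 + e by omega, coeff_mul_add_eq_of_natDegree_le hΛ₃
      (natDegree_polyDelta_le_s8 hq), coeff_polyDelta_of_natDegree_le_s8 hq]
    push_cast
    ring

end

theorem apply_polyDelta_mul_taylor {L₀ L₁ : ℂ[X] →ₗ[ℂ] ℂ} {Λ₂ Λ₃ : ℂ[X]}
    (hrel₁ : ∀ p, L₁ (polyDelta p) = -L₀ (Λ₂ * p)) (hrel₂ : ∀ p, L₁ p = L₀ (Λ₃ * p))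
    (p q : ℂ[X]) :
    L₁ (polyDelta p * taylor 1 q) = -L₀ ((Λ₂ * q + Λ₃ * polyDelta q) * p) := by
  have hsplit : polyDelta p * taylor 1 q = polyDelta (p * q) - p * polyDelta q := by
    rw [polyDelta_mul_s8]
    ring
  rw [hsplit, map_sub, hrel₁, hrel₂,
    show (Λ₂ * q + Λ₃ * polyDelta q) * p = Λ₂ * (p * q) + Λ₃ * (p * polyDelta q) by ring, map_add]
  ring

theorem apply_polyDelta_mul_of_natDegree_le {L₀ L₁ : ℂ[X] →ₗ[ℂ] ℂ} {P₀ : ℕ → ℂ[X]} {h₀ : ℕ → ℂ}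
    {Λ₂ Λ₃ : ℂ[X]} (hP₀ : IsMonicOrthogonal L₀ P₀ h₀) (hΛ₂ : Λ₂.natDegree ≤ 2)
    (hΛ₃ : Λ₃.natDegree ≤ 3) (hrel₁ : ∀ p, L₁ (polyDelta p) = -L₀ (Λ₂ * p))
    (hrel₂ : ∀ p, L₁ p = L₀ (Λ₃ * p)) {m : ℕ} {r : ℂ[X]} (hr : r.natDegree ≤ m) :
    L₁ (polyDelta (P₀ (m + 2)) * r) =
      -((Λ₂.coeff 2 + m * Λ₃.coeff 3) * r.coeff m * h₀ (m + 2)) := by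
  obtain ⟨q, rfl⟩ : ∃ q, taylor 1 q = r :=
    ⟨taylor (-1) r, by rw [taylor_taylor, add_neg_cancel, taylor_zero]⟩
  rw [natDegree_taylor] at hr
  rw [apply_polyDelta_mul_taylor hrel₁ hrel₂, hP₀.apply_mul_of_natDegree_le
      (natDegree_mul_add_mul_polyDelta_le hΛ₂ hΛ₃ hr),
    coeff_mul_add_mul_polyDelta hΛ₂ hΛ₃ hr, coeff_taylor_of_natDegree_le hr]

theorem natDegree_polyDelta_sub_C_mul_le {p r : ℂ[X]} {m : ℕ} (hp : p.Monic)
    (hpdeg : p.natDegree = m + 2) (hr : r.Monic) (hrdeg : r.natDegree = m + 1) :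
    (polyDelta p - C ((m : ℂ) + 2) * r).natDegree ≤ m := by
  have hle : (polyDelta p - C ((m : ℂ) + 2) * r).natDegree ≤ m + 1 :=
    (natDegree_sub_le _ _).trans <|
      max_le (natDegree_polyDelta_le_s8 hpdeg.le) ((natDegree_C_mul_le _ _).trans hrdeg.le)
  have hp1 : p.coeff (m + 1 + 1) = 1 := hpdeg ▸ hp.coeff_natDegree
  have hr1 : r.coeff (m + 1) = 1 := hrdeg ▸ hr.coeff_natDegree
  refine natDegree_le_pred hle ?_
  rw [coeff_sub, coeff_polyDelta_of_natDegree_le_s8 hpdeg.le, coeff_C_mul, hp1, hr1]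
  push_cast
  ring

theorem polyDelta_eq_C_mul_sub_of_mul_eq {L₀ L₁ : ℂ[X] →ₗ[ℂ] ℂ} {P₀ P₁ : ℕ → ℂ[X]}
    {h₀ h₁ : ℕ → ℂ} {Λ₂ Λ₃ : ℂ[X]} (hP₀ : IsMonicOrthogonal L₀ P₀ h₀)
    (hP₁ : IsMonicOrthogonal L₁ P₁ h₁) (hΛ₂ : Λ₂.natDegree ≤ 2) (hΛ₃ : Λ₃.natDegree ≤ 3)
    (hrel₁ : ∀ p, L₁ (polyDelta p) = -L₀ (Λ₂ * p)) (hrel₂ : ∀ p, L₁ p = L₀ (Λ₃ * p))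
    {m : ℕ} {τ : ℂ}
    (hτ : ((m : ℂ) + 2) * τ * h₁ m = (Λ₂.coeff 2 + m * Λ₃.coeff 3) * h₀ (m + 2)) :
    polyDelta (P₀ (m + 2)) = C ((m : ℂ) + 2) * (P₁ (m + 1) - C τ * P₁ m) := by
  have hsplit : polyDelta (P₀ (m + 2)) - C ((m : ℂ) + 2) * (P₁ (m + 1) - C τ * P₁ m) =
      polyDelta (P₀ (m + 2)) - C ((m : ℂ) + 2) * P₁ (m + 1) + ((m + 2) * τ) • P₁ m := by
    rw [smul_eq_C_mul, C_mul]
    ring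
  rw [← sub_eq_zero]
  refine hP₁.eq_zero_of_forall_apply_mul_eq_zero (n := m) ?_ fun k hk => ?_
  · rw [hsplit]
    exact natDegree_add_le_of_degree_le
      (natDegree_polyDelta_sub_C_mul_le (hP₀.monic _) (hP₀.natDegree_eq _) (hP₁.monic _)
        (hP₁.natDegree_eq _))
      ((natDegree_smul_le _ _).trans (hP₁.natDegree_eq m).le)
  rw [hsplit, add_mul, sub_mul, map_add, map_sub, apply_polyDelta_mul_of_natDegree_le hP₀ hΛ₂ hΛ₃
      hrel₁ hrel₂ ((hP₁.natDegree_eq k).trans_le hk), mul_assoc, ← smul_eq_C_mul, smul_mul_assoc,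
    smul_mul_assoc, map_smul, map_smul, hP₁.apply_mul, hP₁.apply_mul, if_neg (by omega),
    smul_eq_mul, smul_eq_mul]
  rcases hk.eq_or_lt with rfl | hlt
  · rw [hP₁.coeff_self, if_pos rfl]
    linear_combination hτ
  · rw [coeff_eq_zero_of_natDegree_lt ((hP₁.natDegree_eq k).trans_lt hlt), if_neg hlt.ne']
    ring

theorem functional_relations_imply_coherent_pair_general (L₀ L₁ : Polynomial ℂ →ₗ[ℂ] ℂ)
    (P₀ P₁ : ℕ → Polynomial ℂ) (h₀ h₁ : ℕ → ℂ)
    (hmonic₀ : ∀ n, (P₀ n).Monic) (hdeg₀ : ∀ n, (P₀ n).natDegree = n)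
    (hmonic₁ : ∀ n, (P₁ n).Monic) (hdeg₁ : ∀ n, (P₁ n).natDegree = n)
    (hh₀ : ∀ n, h₀ n ≠ 0) (hh₁ : ∀ n, h₁ n ≠ 0)
    (horth₀ : ∀ k n, L₀ (P₀ k * P₀ n) = if k = n then h₀ n else 0)
    (horth₁ : ∀ k n, L₁ (P₁ k * P₁ n) = if k = n then h₁ n else 0)
    (Λ₂ Λ₃ : Polynomial ℂ)
    (hΛ₂deg : Λ₂.natDegree ≤ 2) (hΛ₃deg : Λ₃.natDegree ≤ 3)
    (hadm : ∀ n : ℕ, 1 ≤ n → Λ₂.coeff 2 + ((n : ℂ) - 1) * Λ₃.coeff 3 ≠ 0)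
    (hrel₁ : ∀ p : Polynomial ℂ, L₁ (polyDelta p) = -(L₀ (Λ₂ * p)))
    (hrel₂ : ∀ p : Polynomial ℂ, L₁ p = L₀ (Λ₃ * p)) :
    ∀ n : ℕ, 1 ≤ n →
      (Λ₂.coeff 2 + ((n : ℂ) - 1) * Λ₃.coeff 3) / ((n : ℂ) + 1) *
          (h₀ (n + 1) / h₁ (n - 1)) ≠ 0 ∧
      polyDelta (P₀ (n + 1)) =
        C ((n : ℂ) + 1) * (P₁ n -
          C ((Λ₂.coeff 2 + ((n : ℂ) - 1) * Λ₃.coeff 3) / ((n : ℂ) + 1) *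
            (h₀ (n + 1) / h₁ (n - 1))) * P₁ (n - 1)) := by
  intro n hn
  obtain ⟨m, rfl⟩ := Nat.exists_eq_add_of_le' hn
  have hc : Λ₂.coeff 2 + m * Λ₃.coeff 3 ≠ 0 := by simpa using hadm (m + 1) hn
  have hm : (m : ℂ) + 2 ≠ 0 := by exact_mod_cast (m + 1).succ_ne_zero
  simp only [Nat.add_sub_cancel, Nat.cast_add_one, add_sub_cancel_right, add_assoc,
    one_add_one_eq_two]
  refine ⟨mul_ne_zero (div_ne_zero hc hm) (div_ne_zero (hh₀ _) (hh₁ _)), ?_⟩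
  refine polyDelta_eq_C_mul_sub_of_mul_eq ⟨hmonic₀, hdeg₀, hh₀, horth₀⟩
    ⟨hmonic₁, hdeg₁, hh₁, horth₁⟩ hΛ₂deg hΛ₃deg hrel₁ hrel₂ ?_
  field_simp [hh₁ m]

/-- Converse part of Theorem 1: if `L₀, L₁` admit MOPs and there are polynomials
`Λ₂` (degree exactly 2) and `Λ₃` (degree at most 3) with
`λ₂^{(2)} + (n−1)λ₃^{(3)} ≠ 0` for all `n ≥ 1`, such that `Δ*L₁ = Λ₂L₀` and
`L₁ = Λ₃L₀`, then `{L₀, L₁}` is a `Δ`-coherent pair of the second kind with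
`τ_n = [λ₂^{(2)} + (n−1)λ₃^{(3)}]/(n+1) · h_{n+1}^{(0)}/h_{n−1}^{(1)} ≠ 0`. -/
theorem functional_relations_imply_coherent_pair (L₀ L₁ : Polynomial ℂ →ₗ[ℂ] ℂ)
    (P₀ P₁ : ℕ → Polynomial ℂ) (h₀ h₁ : ℕ → ℂ)
    (hmonic₀ : ∀ n, (P₀ n).Monic) (hdeg₀ : ∀ n, (P₀ n).natDegree = n)
    (hmonic₁ : ∀ n, (P₁ n).Monic) (hdeg₁ : ∀ n, (P₁ n).natDegree = n)
    (hh₀ : ∀ n, h₀ n ≠ 0) (hh₁ : ∀ n, h₁ n ≠ 0)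
    (horth₀ : ∀ k n, L₀ (P₀ k * P₀ n) = if k = n then h₀ n else 0)
    (horth₁ : ∀ k n, L₁ (P₁ k * P₁ n) = if k = n then h₁ n else 0)
    (Λ₂ Λ₃ : Polynomial ℂ)
    (hΛ₂deg : Λ₂.natDegree ≤ 2) (hΛ₂ : Λ₂.coeff 2 ≠ 0) (hΛ₃deg : Λ₃.natDegree ≤ 3)
    (hadm : ∀ n : ℕ, 1 ≤ n → Λ₂.coeff 2 + ((n : ℂ) - 1) * Λ₃.coeff 3 ≠ 0)
    (hrel₁ : ∀ p : Polynomial ℂ, L₁ (polyDelta p) = -(L₀ (Λ₂ * p)))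
    (hrel₂ : ∀ p : Polynomial ℂ, L₁ p = L₀ (Λ₃ * p)) :
    ∀ n : ℕ, 1 ≤ n →
      (Λ₂.coeff 2 + ((n : ℂ) - 1) * Λ₃.coeff 3) / ((n : ℂ) + 1) *
          (h₀ (n + 1) / h₁ (n - 1)) ≠ 0 ∧
      polyDelta (P₀ (n + 1)) =
        C ((n : ℂ) + 1) * (P₁ n -
          C ((Λ₂.coeff 2 + ((n : ℂ) - 1) * Λ₃.coeff 3) / ((n : ℂ) + 1) *
            (h₀ (n + 1) / h₁ (n - 1))) * P₁ (n - 1)) :=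
  functional_relations_imply_coherent_pair_general L₀ L₁ P₀ P₁ h₀ h₁ hmonic₀ hdeg₀ hmonic₁ hdeg₁ hh₀
    hh₁ horth₀ horth₁ Λ₂ Λ₃ hΛ₂deg hΛ₃deg hadm hrel₁ hrel₂
end

section
/- Case IV (Hahn weight): Let ω, a, b ∈ ℂ with b + k ≠ 0 for every integer k ≥ 1, and let N ∈ ℕ. Define the Hahn weight ρ₀ : ℤ → ℂ by ρ₀(x) = (−N)_x (a)_x / ((b+1)_x · x!) for x ≥ 0 and ρ₀(x) = 0 for x < 0. Then with Λ₃(x) = (x+ω)(x−N)(x+a) and Λ₂(x) = (N−a+b−1)x² + (Nω+Na−aω+bω−b)x + Naω, one has Λ₃(x)ρ₀(x) − Λ₃(x−1)ρ₀(x−1) + Λ₂(x)ρ₀(x) = 0 for every integer x. -/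
/-- The Pochhammer symbol `(a)_n = a(a+1)⋯(a+n−1)`. -/
noncomputable def poch (a : ℂ) (n : ℕ) : ℂ := ∏ k ∈ Finset.range n, (a + k)

lemma poch_succ' (c : ℂ) (n : ℕ) : poch c (n + 1) = poch c n * (c + n) :=
  Finset.prod_range_succ _ _

/-- Case IV: the Hahn weight `ρ₀(x) = (−N)_x (a)_x / ((b+1)_x x!)` satisfies the
Pearson-type equation `∇(Λ₃ρ₀) + Λ₂ρ₀ = 0` with `Λ₃(x) = (x+ω)(x−N)(x+a)` and
`Λ₂(x) = (N−a+b−1)x² + (Nω+Na−aω+bω−b)x + Naω`. -/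
theorem hahn_case_IV (ω a b : ℂ) (hb : ∀ k : ℕ, 1 ≤ k → b + (k : ℂ) ≠ 0) (N : ℕ)
    (ρ₀ : ℤ → ℂ)
    (hρneg : ∀ x : ℤ, x < 0 → ρ₀ x = 0)
    (hρ : ∀ x : ℤ, 0 ≤ x →
      ρ₀ x = poch (-(N : ℂ)) x.toNat * poch a x.toNat /
        (poch (b + 1) x.toNat * (x.toNat.factorial : ℂ))) :
    ∀ x : ℤ,
      (((x : ℂ) + ω) * ((x : ℂ) - (N : ℂ)) * ((x : ℂ) + a)) * ρ₀ x -
        ((((x : ℂ) - 1) + ω) * (((x : ℂ) - 1) - (N : ℂ)) * (((x : ℂ) - 1) + a)) *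
          ρ₀ (x - 1) +
        (((N : ℂ) - a + b - 1) * (x : ℂ) ^ 2 +
          ((N : ℂ) * ω + (N : ℂ) * a - a * ω + b * ω - b) * (x : ℂ) +
          (N : ℂ) * a * ω) * ρ₀ x = 0 := by
  intro x
  rcases lt_trichotomy x 0 with hx | hx | hx
  · rw [hρneg x hx, hρneg (x - 1) (by omega)]; ring
  · subst hx
    rw [hρneg (0 - 1) (by norm_num), hρ 0 le_rfl]
    simp [poch]
    ring
  · obtain ⟨m, hm⟩ : ∃ m : ℕ, x = (m : ℤ) + 1 := ⟨(x - 1).toNat, by omega⟩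
    subst hm
    have h1 : ((m : ℤ) + 1).toNat = m + 1 := by omega
    have h2 : ((m : ℤ) + 1 - 1).toNat = m := by omega
    have hρx := hρ ((m : ℤ) + 1) (by omega)
    have hρx' := hρ ((m : ℤ) + 1 - 1) (by omega)
    rw [h1] at hρx
    rw [h2] at hρx'
    rw [hρx, hρx', poch_succ', poch_succ', poch_succ', Nat.factorial_succ]
    have hC : poch (b + 1) m ≠ 0 := by
      rw [poch, Finset.prod_ne_zero_iff]
      intro k _
      have := hb (k + 1) (by omega)
      push_cast at this ⊢
      convert this using 1
      ring
    have hF : ((m.factorial : ℂ)) ≠ 0 := by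
      exact_mod_cast Nat.cast_ne_zero.mpr m.factorial_ne_zero
    have hbm : b + 1 + (m : ℂ) ≠ 0 := by
      have := hb (m + 1) (by omega)
      push_cast at this
      convert this using 1
      ring
    have hm1 : ((m : ℂ) + 1) ≠ 0 := by
      exact_mod_cast (Nat.cast_ne_zero (R := ℂ)).mpr (Nat.succ_ne_zero m)
    push_cast
    field_simp
    ring
end
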